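/- arXiv:1103.1165 — 4 statements merged into one kernel-verified Lean document; each statement's English description precedes it below -/
import Mathlib

section
/- The function R belongs to the class 𝒢; that is, R is continuous, satisfies F(x) ≤ R(x) ≤ F(x) + Δ for all x ∈ ℝ^d_+, and R is concave on every convex set D ⊆ ℝ^d_+ on which R < F + Δ. -/
open Set
open scoped Classical

noncomputable section

/-- The nonnegative orthant of `ℝ^d` (with the Euclidean structure). -/
def orthant (d : ℕ) : Set (EuclideanSpace ℝ (Fin d)) := {x | ∀ i, 0 ≤ x i}

/-- The subdifferential (set of subgradients) of a function `φ : ℝ₊ → ℝ` at a point `t`. -/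
def subdiff (φ : ℝ → ℝ) (t : ℝ) : Set ℝ :=
  {v | ∀ s : ℝ, 0 ≤ s → φ t + v * (s - t) ≤ φ s}

/-- `Fi F i t = F (t • e_i)`, the restriction of `F` to the `i`-th coordinate axis. -/
def Fi {d : ℕ} (F : EuclideanSpace ℝ (Fin d) → ℝ) (i : Fin d) (t : ℝ) : ℝ :=
  F (t • EuclideanSpace.single i (1 : ℝ))

/-- The set `{t > 0 : (F_i(t) + Δ - F(0))/t ∈ ∂F_i(t)}` defining `A_i`. -/
def setA {d : ℕ} (F : EuclideanSpace ℝ (Fin d) → ℝ) (Δ : ℝ) (i : Fin d) : Set ℝ :=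
  {t | 0 < t ∧ (Fi F i t + Δ - F 0) / t ∈ subdiff (Fi F i) t}

/-- `A_i` (finite value; `A_i = ∞` corresponds to `setA F Δ i` being empty). -/
def Avar {d : ℕ} (F : EuclideanSpace ℝ (Fin d) → ℝ) (Δ : ℝ) (i : Fin d) : ℝ :=
  sInf (setA F Δ i)

/-- `B_i = (F_i(A_i) + Δ - F(0))/A_i` if `A_i < ∞`, and
`B_i = sup ⋃_{t>0} ∂F_i(t)` otherwise. -/
def Bvar {d : ℕ} (F : EuclideanSpace ℝ (Fin d) → ℝ) (Δ : ℝ) (i : Fin d) : ℝ :=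
  if (setA F Δ i).Nonempty then (Fi F i (Avar F Δ i) + Δ - F 0) / Avar F Δ i
  else sSup (⋃ t ∈ Ioi (0 : ℝ), subdiff (Fi F i) t)

/-- The inner product `⟨B, x⟩`. -/
def Bdot {d : ℕ} (F : EuclideanSpace ℝ (Fin d) → ℝ) (Δ : ℝ)
    (x : EuclideanSpace ℝ (Fin d)) : ℝ :=
  ∑ i, Bvar F Δ i * x i

/-- The set `{t > 0 : F(0) + ⟨B, t·x/‖x‖⟩ ≥ Δ + F(t·x/‖x‖)}` defining `H(x)`. -/
def setH {d : ℕ} (F : EuclideanSpace ℝ (Fin d) → ℝ) (Δ : ℝ)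
    (x : EuclideanSpace ℝ (Fin d)) : Set ℝ :=
  {t | 0 < t ∧ Δ + F ((t / ‖x‖) • x) ≤ F 0 + Bdot F Δ ((t / ‖x‖) • x)}

/-- The game analogue `R` of the concave envelope: `R(0) = F(0)`; for `x ≠ 0`,
`R(x) = F(x) + Δ` if `‖x‖ ≥ H(x)` (i.e. `setH F Δ x` is nonempty with `sInf ≤ ‖x‖`),
and `R(x) = F(0) + ⟨B, x⟩` if `‖x‖ < H(x)`. -/
def Rfun {d : ℕ} (F : EuclideanSpace ℝ (Fin d) → ℝ) (Δ : ℝ)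
    (x : EuclideanSpace ℝ (Fin d)) : ℝ :=
  if x = 0 then F 0
  else if (setH F Δ x).Nonempty ∧ sInf (setH F Δ x) ≤ ‖x‖ then F x + Δ
  else F 0 + Bdot F Δ x

/-- Membership in the class `𝒢`: `f : ℝ^d₊ → ℝ₊` continuous, `F ≤ f ≤ F + Δ`, and `f`
is concave on every convex subset `D` of the orthant on which `f < F + Δ`. -/
def memG {d : ℕ} (F : EuclideanSpace ℝ (Fin d) → ℝ) (Δ : ℝ)
    (f : EuclideanSpace ℝ (Fin d) → ℝ) : Prop :=
  ContinuousOn f (orthant d) ∧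
  (∀ x ∈ orthant d, 0 ≤ f x) ∧
  (∀ x ∈ orthant d, F x ≤ f x ∧ f x ≤ F x + Δ) ∧
  (∀ D : Set (EuclideanSpace ℝ (Fin d)), D ⊆ orthant d → Convex ℝ D →
    (∀ x ∈ D, f x < F x + Δ) → ConcaveOn ℝ D f)

/-!
Along each axis, `Bᵢ` is the least slope of a chord of `Fᵢ` issued from `(0, F 0 - Δ)`, attained
at `Aᵢ`; when `Aᵢ = ∞` it is the asymptotic slope of `Fᵢ`, so that `Fᵢ` grows at most at rate `Bᵢ`.
Jensen's inequality on the simplex spanned by `0` and the points `Aᵢ eᵢ`, combined with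
translations along the axes with `Aᵢ = ∞`, gives `F x ≤ ℓ x - σ(x) Δ` whenever
`σ(x) = ∑ xᵢ / Aᵢ ≤ 1`, where `ℓ x = F 0 + ⟨B, x⟩`. So a ray reaching the face `σ = 1` enters the
set defining `H` no later than there, and as `ℓ - F` is concave along the ray, it stays `≥ Δ` from
`H` up to that face. Hence `R = min ℓ (F + Δ)` on `{σ ≤ 1}` and `R = F + Δ` on `{σ > 1}`; the two
formulas agree on `{σ = 1}`, which gives continuity, and `R = ℓ` is affine wherever `R < F + Δ`.
-/

open Filter

local notation "𝐞" i:max => EuclideanSpace.single i (1 : ℝ)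

section OneDim

variable {φ g : ℝ → ℝ} {L : NNReal} {Δ b K s t : ℝ}

theorem LipschitzOnWith.le_add_mul_norm_sub {E : Type*} [SeminormedAddCommGroup E] {f : E → ℝ}
    {S : Set E} (hf : LipschitzOnWith L f S) {x y : E} (hx : x ∈ S) (hy : y ∈ S) :
    f x ≤ f y + L * ‖x - y‖ := by
  have := hf.dist_le_mul x hx y hy
  rw [Real.dist_eq, dist_eq_norm] at this
  linarith [le_abs_self (f x - f y)]

theorem ConvexOn.le_add_mul_sub_of_le_affine (hg : ConvexOn ℝ (Ici s) g)
    (hbd : ∀ r, s ≤ r → g r ≤ b * r + K) (hst : s ≤ t) : g t ≤ g s + b * (t - s) := by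
  rcases hst.eq_or_lt with rfl | hst
  · simp
  have hslope : (g t - g s) / (t - s) ≤ b := by
    refine ge_of_tendsto (f := fun r => b + (b * s + K - g s) / (r - s)) (x := atTop) ?_ ?_
    · simpa [sub_eq_add_neg] using tendsto_const_nhds.add
        (tendsto_const_nhds.div_atTop (tendsto_atTop_add_const_right _ (-s) tendsto_id))
    · filter_upwards [eventually_gt_atTop t] with r hr
      have hrs : 0 < r - s := by linarith
      calc (g t - g s) / (t - s) ≤ (g r - g s) / (r - s) :=
            hg.secant_mono self_mem_Ici hst.le (hst.trans hr).le hst.ne' (hst.trans hr).ne' hr.le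
        _ ≤ (b * r + K - g s) / (r - s) := by gcongr; exact hbd r (hst.trans hr).le
        _ = b + (b * s + K - g s) / (r - s) := by field_simp; ring
  rw [div_le_iff₀ (sub_pos.2 hst)] at hslope
  linarith

theorem ConvexOn.rightDeriv_mem_subdiff (hφ : ConvexOn ℝ (Ici 0) φ) (ht : 0 < t) :
    derivWithin φ (Ioi t) t ∈ subdiff φ t := by
  have hint : t ∈ interior (Ici (0 : ℝ)) := by rwa [interior_Ici]
  intro s hs
  rcases lt_trichotomy s t with hst | rfl | hts
  · have h := (hφ.slope_le_leftDeriv_of_mem_interior hs hint hst).trans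
      (hφ.leftDeriv_le_rightDeriv_of_mem_interior hint)
    rw [slope_def_field, div_le_iff₀ (sub_pos.2 hst)] at h
    linarith
  · simp
  · have h := hφ.rightDeriv_le_slope_of_mem_interior hint hs hts
    rw [slope_def_field, le_div_iff₀ (sub_pos.2 hts)] at h
    linarith

theorem LipschitzOnWith.le_of_mem_subdiff (hφ : LipschitzOnWith L φ (Ici 0)) {v : ℝ}
    (hs : 0 ≤ s) (hv : v ∈ subdiff φ s) : v ≤ L := by
  have h1 := hv (s + 1) (by linarith)
  have h2 := hφ.le_add_mul_norm_sub (x := s + 1) (y := s) (by simp; linarith) hs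
  simp only [add_sub_cancel_left, Real.norm_eq_abs, abs_one, mul_one] at h1 h2
  linarith

theorem le_add_sSup_subdiff_mul (hφc : ConvexOn ℝ (Ici 0) φ)
    (hφL : LipschitzOnWith L φ (Ici 0)) (ht : 0 ≤ t) :
    φ t ≤ φ 0 + sSup (⋃ s ∈ Ioi (0 : ℝ), subdiff φ s) * t := by
  rcases ht.eq_or_lt with rfl | ht
  · simp
  have hv := hφc.rightDeriv_mem_subdiff ht
  have hbdd : BddAbove (⋃ s ∈ Ioi (0 : ℝ), subdiff φ s) := by
    refine ⟨L, ?_⟩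
    simp only [mem_upperBounds, mem_iUnion]
    rintro v ⟨s, hs, hv⟩
    exact hφL.le_of_mem_subdiff (le_of_lt hs) hv
  have hle := mul_le_mul_of_nonneg_right (le_csSup hbdd (mem_biUnion ht hv)) ht.le
  have := hv 0 le_rfl
  linarith

theorem le_mul_of_slope_mem_subdiff (hφ : LipschitzOnWith L φ (Ici 0)) {t₀ : ℝ}
    (ht₀ : 0 < t₀) (ht : 0 < t) (h : (φ t + Δ - φ 0) / t ∈ subdiff φ t) :
    Δ * t₀ ≤ t * (φ t₀ + Δ - φ 0 + L * t₀) := by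
  have h1 := mul_le_mul_of_nonneg_left (h t₀ ht₀.le) ht.le
  have h2 := hφ.le_add_mul_norm_sub (x := 0) (y := t) self_mem_Ici ht.le
  simp only [zero_sub, norm_neg, Real.norm_eq_abs, abs_of_pos ht] at h2
  have hm : (φ t + Δ - φ 0) / t * t = φ t + Δ - φ 0 := div_mul_cancel₀ _ ht.ne'
  nlinarith [mul_le_mul_of_nonneg_right h2 ht₀.le]

end OneDim

theorem ConvexOn.comp_ray {E : Type*} [AddCommGroup E] [Module ℝ E] {S : Set E} {f : E → ℝ}
    (hf : ConvexOn ℝ S f) {z v : E} (hzv : ∀ r : ℝ, 0 ≤ r → z + r • v ∈ S) :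
    ConvexOn ℝ (Ici (0 : ℝ)) fun r => f (z + r • v) := by
  refine ⟨convex_Ici 0, fun a ha b hb μ ν hμ hν hμν => ?_⟩
  have h := hf.2 (hzv a ha) (hzv b hb) hμ hν hμν
  obtain rfl : ν = 1 - μ := by linarith
  convert h using 2
  simp only [smul_eq_mul]
  module

theorem ConvexOn.map_sum_le_of_sum_le_one {ι E : Type*} [AddCommGroup E] [Module ℝ E]
    {S : Set E} {f : E → ℝ} (hf : ConvexOn ℝ S f) (h0 : (0 : E) ∈ S) {t : Finset ι}
    {w : ι → ℝ} {p : ι → E} (hw : ∀ i ∈ t, 0 ≤ w i) (hw1 : ∑ i ∈ t, w i ≤ 1)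
    (hp : ∀ i ∈ t, p i ∈ S) :
    f (∑ i ∈ t, w i • p i) ≤ (1 - ∑ i ∈ t, w i) * f 0 + ∑ i ∈ t, w i * f (p i) := by
  have h := hf.map_sum_le (t := t.insertNone) (w := fun o => o.elim (1 - ∑ i ∈ t, w i) w)
    (p := fun o => o.elim 0 p) ?_ (by simp [Finset.sum_insertNone]) ?_
  · simpa [Finset.sum_insertNone] using h
  · simp only [Finset.forall_mem_insertNone]
    exact ⟨by simpa using hw1, hw⟩
  · simp only [Finset.forall_mem_insertNone]
    exact ⟨h0, hp⟩

section Orthant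

variable {d : ℕ} {x y : EuclideanSpace ℝ (Fin d)}

theorem zero_mem_orthant : (0 : EuclideanSpace ℝ (Fin d)) ∈ orthant d := fun _ => le_rfl

theorem add_mem_orthant (hx : x ∈ orthant d) (hy : y ∈ orthant d) : x + y ∈ orthant d :=
  fun i => add_nonneg (hx i) (hy i)

theorem smul_mem_orthant (hx : x ∈ orthant d) {c : ℝ} (hc : 0 ≤ c) : c • x ∈ orthant d :=
  fun i => mul_nonneg hc (hx i)

theorem single_mem_orthant (i : Fin d) : 𝐞 i ∈ orthant d := by
  intro j
  by_cases h : j = i <;> simp [h]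

theorem sum_smul_single_mem_orthant (S : Finset (Fin d)) {c : Fin d → ℝ}
    (hc : ∀ i ∈ S, 0 ≤ c i) : ∑ i ∈ S, c i • 𝐞 i ∈ orthant d := by
  intro j
  rw [WithLp.ofLp_sum, Finset.sum_apply]
  exact Finset.sum_nonneg fun i hi => smul_mem_orthant (single_mem_orthant i) (hc i hi) j

end Orthant

section Axes

variable {d : ℕ} {F : EuclideanSpace ℝ (Fin d) → ℝ} {Δ : ℝ} {L : NNReal} {i : Fin d}

theorem Fi_zero : Fi F i 0 = F 0 := by simp [Fi]

theorem convexOn_Fi (hF : ConvexOn ℝ (orthant d) F) (i : Fin d) :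
    ConvexOn ℝ (Ici (0 : ℝ)) (Fi F i) := by
  have h := hF.comp_ray (z := 0) (v := 𝐞 i)
    fun r hr => by simpa using smul_mem_orthant (single_mem_orthant i) hr
  simp only [zero_add] at h
  exact h

theorem lipschitzOnWith_Fi (hF : LipschitzOnWith L F (orthant d)) (i : Fin d) :
    LipschitzOnWith L (Fi F i) (Ici (0 : ℝ)) := by
  refine LipschitzOnWith.of_dist_le_mul fun t ht s hs => ?_
  have := hF.dist_le_mul _ (smul_mem_orthant (single_mem_orthant i) ht) _
    (smul_mem_orthant (single_mem_orthant i) hs)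
  rwa [dist_eq_norm (t • _), ← sub_smul, norm_smul, PiLp.norm_single, norm_one,
    mul_one, ← dist_eq_norm] at this

theorem Avar_nonneg : 0 ≤ Avar F Δ i := Real.sInf_nonneg fun _ ht => ht.1.le

theorem Avar_eq_zero (h : ¬(setA F Δ i).Nonempty) : Avar F Δ i = 0 := by
  rw [Avar, not_nonempty_iff_eq_empty.1 h, Real.sInf_empty]

theorem Avar_pos (hF : LipschitzOnWith L F (orthant d)) (hne : (setA F Δ i).Nonempty)
    (hΔ : 0 < Δ) : 0 < Avar F Δ i := by
  obtain ⟨t₀, ht₀, h₀⟩ := id hne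
  have key : ∀ t ∈ setA F Δ i, Δ * t₀ ≤ t * (Fi F i t₀ + Δ - F 0 + L * t₀) := by
    rintro t ⟨ht, h⟩
    rw [← Fi_zero (F := F) (i := i)] at h ⊢
    exact le_mul_of_slope_mem_subdiff (lipschitzOnWith_Fi hF i) ht₀ ht h
  have hD : 0 < Fi F i t₀ + Δ - F 0 + L * t₀ :=
    pos_of_mul_pos_right ((mul_pos hΔ ht₀).trans_le (key t₀ ⟨ht₀, h₀⟩)) ht₀.le
  calc 0 < Δ * t₀ / (Fi F i t₀ + Δ - F 0 + L * t₀) := by positivity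
    _ ≤ Avar F Δ i := le_csInf hne fun t ht => (div_le_iff₀ hD).2 (key t ht)

theorem Fi_Avar (hne : (setA F Δ i).Nonempty) (hA : Avar F Δ i ≠ 0) :
    Fi F i (Avar F Δ i) = F 0 + Bvar F Δ i * Avar F Δ i - Δ := by
  rw [Bvar, if_pos hne, div_mul_cancel₀ _ hA]
  ring

theorem Fi_le_of_not_nonempty (hFc : ConvexOn ℝ (orthant d) F)
    (hFL : LipschitzOnWith L F (orthant d)) (h : ¬(setA F Δ i).Nonempty) {t : ℝ}
    (ht : 0 ≤ t) : Fi F i t ≤ F 0 + Bvar F Δ i * t := by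
  rw [Bvar, if_neg h, ← Fi_zero (F := F) (i := i)]
  exact le_add_sSup_subdiff_mul (convexOn_Fi hFc i) (lipschitzOnWith_Fi hFL i) ht

theorem le_add_Bvar_mul_of_not_nonempty (hFc : ConvexOn ℝ (orthant d) F)
    (hFL : LipschitzOnWith L F (orthant d)) (h : ¬(setA F Δ i).Nonempty)
    {z : EuclideanSpace ℝ (Fin d)} (hz : z ∈ orthant d) {s : ℝ} (hs : 0 ≤ s) :
    F (z + s • 𝐞 i) ≤ F z + Bvar F Δ i * s := by
  have hray : ∀ r : ℝ, 0 ≤ r → z + r • 𝐞 i ∈ orthant d :=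
    fun r hr => add_mem_orthant hz (smul_mem_orthant (single_mem_orthant i) hr)
  have hbd : ∀ r : ℝ, 0 ≤ r →
      F (z + r • 𝐞 i) ≤ Bvar F Δ i * r + (F 0 + L * ‖z‖) := by
    intro r hr
    have h1 := hFL.le_add_mul_norm_sub (hray r hr) (smul_mem_orthant (single_mem_orthant i) hr)
    have h2 := Fi_le_of_not_nonempty hFc hFL h hr
    rw [add_sub_cancel_right] at h1
    unfold Fi at h2
    linarith
  simpa using (hFc.comp_ray hray).le_add_mul_sub_of_le_affine hbd hs

end Axes

section Gauge

variable {d : ℕ} {F : EuclideanSpace ℝ (Fin d) → ℝ} {Δ : ℝ} {L : NNReal}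
  {x : EuclideanSpace ℝ (Fin d)}

/-- `σ(x) = ∑ xᵢ / Aᵢ`. An axis with `Aᵢ = ∞` contributes nothing: there
`Avar F Δ i = sInf ∅ = 0` and `xᵢ / 0 = 0`. -/
def simplexGauge (F : EuclideanSpace ℝ (Fin d) → ℝ) (Δ : ℝ) (x : EuclideanSpace ℝ (Fin d)) :
    ℝ :=
  ∑ i, x i / Avar F Δ i

def finiteAxes (F : EuclideanSpace ℝ (Fin d) → ℝ) (Δ : ℝ) : Finset (Fin d) :=
  {i | (setA F Δ i).Nonempty}

theorem Bdot_eq_inner : Bdot F Δ = innerSL ℝ (WithLp.toLp 2 (Bvar F Δ)) := by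
  ext x
  simp [Bdot, PiLp.inner_apply, mul_comm]

theorem simplexGauge_eq_inner :
    simplexGauge F Δ = innerSL ℝ (WithLp.toLp 2 fun i => (Avar F Δ i)⁻¹) := by
  ext x
  simp [simplexGauge, PiLp.inner_apply, div_eq_mul_inv, mul_comm]

theorem simplexGauge_nonneg (hx : x ∈ orthant d) : 0 ≤ simplexGauge F Δ x :=
  Finset.sum_nonneg fun _ _ => div_nonneg (hx _) Avar_nonneg

theorem sum_finiteAxes_div_Avar (x : EuclideanSpace ℝ (Fin d)) :
    ∑ i ∈ finiteAxes F Δ, x i / Avar F Δ i = simplexGauge F Δ x :=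
  Finset.sum_subset (Finset.subset_univ _) fun i _ hi => by
    rw [Avar_eq_zero (by simpa [finiteAxes] using hi), div_zero]

theorem F_sum_finiteAxes_le (hFc : ConvexOn ℝ (orthant d) F)
    (hFL : LipschitzOnWith L F (orthant d)) (hΔ : 0 < Δ) (hx : x ∈ orthant d)
    (hσ : simplexGauge F Δ x ≤ 1) :
    F (∑ i ∈ finiteAxes F Δ, x i • 𝐞 i) ≤
      F 0 + ∑ i ∈ finiteAxes F Δ, Bvar F Δ i * x i - simplexGauge F Δ x * Δ := by
  have hne : ∀ i ∈ finiteAxes F Δ, (setA F Δ i).Nonempty := by simp [finiteAxes]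
  have hA : ∀ i ∈ finiteAxes F Δ, 0 < Avar F Δ i := fun i hi => Avar_pos hFL (hne i hi) hΔ
  have hJensen := hFc.map_sum_le_of_sum_le_one zero_mem_orthant (t := finiteAxes F Δ)
    (w := fun i => x i / Avar F Δ i) (p := fun i => Avar F Δ i • 𝐞 i)
    (fun i _ => div_nonneg (hx i) Avar_nonneg) (by rwa [sum_finiteAxes_div_Avar])
    (fun i hi => smul_mem_orthant (single_mem_orthant i) (hA i hi).le)
  have hpoints : ∑ i ∈ finiteAxes F Δ, (x i / Avar F Δ i) • Avar F Δ i • 𝐞 i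
      = ∑ i ∈ finiteAxes F Δ, x i • 𝐞 i :=
    Finset.sum_congr rfl fun i hi => by rw [smul_smul, div_mul_cancel₀ _ (hA i hi).ne']
  have hvalues :
      ∑ i ∈ finiteAxes F Δ, x i / Avar F Δ i * F (Avar F Δ i • 𝐞 i)
      = simplexGauge F Δ x * (F 0 - Δ) + ∑ i ∈ finiteAxes F Δ, Bvar F Δ i * x i := by
    rw [← sum_finiteAxes_div_Avar, Finset.sum_mul, ← Finset.sum_add_distrib]
    refine Finset.sum_congr rfl fun i hi => ?_
    have h := Fi_Avar (hne i hi) (hA i hi).ne'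
    unfold Fi at h
    rw [h]
    field_simp [(hA i hi).ne']
    ring
  rw [hpoints, hvalues, sum_finiteAxes_div_Avar] at hJensen
  linarith

theorem F_add_sum_le_of_not_nonempty (hFc : ConvexOn ℝ (orthant d) F)
    (hFL : LipschitzOnWith L F (orthant d)) {S : Finset (Fin d)}
    (hS : ∀ i ∈ S, ¬(setA F Δ i).Nonempty) {z : EuclideanSpace ℝ (Fin d)}
    (hz : z ∈ orthant d) {c : Fin d → ℝ} (hc : ∀ i ∈ S, 0 ≤ c i) :
    F (z + ∑ i ∈ S, c i • 𝐞 i) ≤ F z + ∑ i ∈ S, Bvar F Δ i * c i := by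
  induction S using Finset.induction_on with
  | empty => simp
  | insert j S hj ih =>
    simp only [Finset.mem_insert, forall_eq_or_imp] at hS hc
    have hmem := add_mem_orthant hz (sum_smul_single_mem_orthant S hc.2)
    have hsplit : z + (c j • 𝐞 j + ∑ i ∈ S, c i • 𝐞 i)
        = (z + ∑ i ∈ S, c i • 𝐞 i) + c j • 𝐞 j := by
      abel
    rw [Finset.sum_insert hj, Finset.sum_insert hj, hsplit]
    linarith [le_add_Bvar_mul_of_not_nonempty hFc hFL hS.1 hmem hc.1, ih hS.2 hc.2]

theorem F_le_Bdot_sub_simplexGauge (hFc : ConvexOn ℝ (orthant d) F)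
    (hFL : LipschitzOnWith L F (orthant d)) (hΔ : 0 < Δ) (hx : x ∈ orthant d)
    (hσ : simplexGauge F Δ x ≤ 1) :
    F x ≤ F 0 + Bdot F Δ x - simplexGauge F Δ x * Δ := by
  have hx_eq : x = ∑ i ∈ finiteAxes F Δ, x i • 𝐞 i +
      ∑ i ∈ {i | ¬(setA F Δ i).Nonempty}, x i • 𝐞 i := by
    rw [finiteAxes, Finset.sum_filter_add_sum_filter_not]
    ext j
    simp [Pi.single_apply]
  have hB : Bdot F Δ x = ∑ i ∈ finiteAxes F Δ, Bvar F Δ i * x i +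
      ∑ i ∈ {i | ¬(setA F Δ i).Nonempty}, Bvar F Δ i * x i := by
    rw [Bdot, finiteAxes, Finset.sum_filter_add_sum_filter_not]
  calc
    F x ≤ F (∑ i ∈ finiteAxes F Δ, x i • 𝐞 i) +
        ∑ i ∈ {i | ¬(setA F Δ i).Nonempty}, Bvar F Δ i * x i := by
      conv_lhs => rw [hx_eq]
      exact F_add_sum_le_of_not_nonempty hFc hFL (by simp)
        (sum_smul_single_mem_orthant _ fun i _ => hx i) fun i _ => hx i
    _ ≤ F 0 + Bdot F Δ x - simplexGauge F Δ x * Δ := by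
      linarith [F_sum_finiteAxes_le hFc hFL hΔ hx hσ]

end Gauge

section Envelope

variable {d : ℕ} {F : EuclideanSpace ℝ (Fin d) → ℝ} {Δ : ℝ} {L : NNReal}
  {x : EuclideanSpace ℝ (Fin d)}

theorem Bdot_smul (c : ℝ) (x : EuclideanSpace ℝ (Fin d)) :
    Bdot F Δ (c • x) = c * Bdot F Δ x := by
  rw [Bdot_eq_inner, map_smul, smul_eq_mul]

theorem simplexGauge_smul (c : ℝ) (x : EuclideanSpace ℝ (Fin d)) :
    simplexGauge F Δ (c • x) = c * simplexGauge F Δ x := by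
  rw [simplexGauge_eq_inner, map_smul, smul_eq_mul]

theorem add_F_smul_le_of_le (hFc : ConvexOn ℝ (orthant d) F)
    (hFL : LipschitzOnWith L F (orthant d)) (hΔ : 0 < Δ) {u : EuclideanSpace ℝ (Fin d)}
    (hu : u ∈ orthant d) {T t : ℝ} (hT : 0 ≤ T) (hTt : T ≤ t)
    (ht : t * simplexGauge F Δ u ≤ 1) (hreach : Δ + F (T • u) ≤ F 0 + T * Bdot F Δ u) :
    Δ + F (t • u) ≤ F 0 + t * Bdot F Δ u := by
  set k : ℝ → ℝ := fun s => F (s • u) - s * Bdot F Δ u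
  have hk : ConvexOn ℝ (Ici 0) k := by
    refine ((hFc.comp_ray (z := 0) (v := u) fun r hr => ?_).sub
      ((LinearMap.mulRight ℝ (Bdot F Δ u)).concaveOn (convex_Ici 0))).congr fun s _ => ?_
    · simpa using smul_mem_orthant hu hr
    · simp [k]
  have hkey : ∀ s, 0 ≤ s → s * simplexGauge F Δ u ≤ 1 →
      k s ≤ F 0 - s * simplexGauge F Δ u * Δ := fun s hs hσ => by
    have := F_le_Bdot_sub_simplexGauge hFc hFL hΔ (smul_mem_orthant hu hs)
      (by rwa [simplexGauge_smul])
    rw [simplexGauge_smul, Bdot_smul] at this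
    simp only [k]
    linarith
  suffices k t ≤ F 0 - Δ by simp only [k] at this; linarith
  rcases (simplexGauge_nonneg hu).eq_or_lt with hσ | hσ
  · have hbd : ∀ r, T ≤ r → k r ≤ 0 * r + F 0 := fun r hr => by
      have := hkey r (hT.trans hr) (by rw [← hσ, mul_zero]; exact zero_le_one)
      rw [← hσ] at this
      linarith
    have := (hk.subset (Ici_subset_Ici.2 hT) (convex_Ici T)).le_add_mul_sub_of_le_affine hbd hTt
    simp only [k] at this ⊢
    linarith
  · have hσt : t ≤ (simplexGauge F Δ u)⁻¹ := by rwa [← one_div, le_div_iff₀ hσ]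
    have hend := hkey _ (inv_nonneg.2 hσ.le) (inv_mul_cancel₀ hσ.ne').le
    rw [inv_mul_cancel₀ hσ.ne', one_mul] at hend
    have hmid := hk.le_on_segment (mem_Ici.2 hT) (mem_Ici.2 (hT.trans (hTt.trans hσt)))
      (by rw [segment_eq_Icc (hTt.trans hσt)]; exact ⟨hTt, hσt⟩)
    exact hmid.trans (max_le (by simp only [k]; linarith) hend)

theorem mem_setH_iff {t : ℝ} :
    t ∈ setH F Δ x ↔ 0 < t ∧ Δ + F (t • ‖x‖⁻¹ • x) ≤ F 0 + t * Bdot F Δ (‖x‖⁻¹ • x) := by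
  rw [setH, mem_ofPred_eq, div_eq_mul_inv, mul_smul, Bdot_smul]

theorem le_Bdot_of_sInf_setH_le (hFc : ConvexOn ℝ (orthant d) F)
    (hFL : LipschitzOnWith L F (orthant d)) (hΔ : 0 < Δ) (hx : x ∈ orthant d) (hx0 : x ≠ 0)
    (hσ : simplexGauge F Δ x ≤ 1) (hne : (setH F Δ x).Nonempty)
    (hle : sInf (setH F Δ x) ≤ ‖x‖) :
    F x + Δ ≤ F 0 + Bdot F Δ x := by
  set u := ‖x‖⁻¹ • x
  have hnorm : 0 < ‖x‖ := norm_pos_iff.2 hx0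
  have hu : u ∈ orthant d := smul_mem_orthant hx (inv_nonneg.2 hnorm.le)
  have hclosed : IsClosed {t ∈ Ici (0 : ℝ) | Δ + F (t • u) ≤ F 0 + t * Bdot F Δ u} :=
    isClosed_Ici.isClosed_le
      (continuousOn_const.add (hFL.continuousOn.comp
        (continuous_id.smul continuous_const).continuousOn fun t ht => smul_mem_orthant hu ht))
      (continuousOn_const.add (continuousOn_id.mul continuousOn_const))
  have hsub : setH F Δ x ⊆ {t ∈ Ici (0 : ℝ) | Δ + F (t • u) ≤ F 0 + t * Bdot F Δ u} :=
    fun t ht => ⟨(mem_setH_iff.1 ht).1.le, (mem_setH_iff.1 ht).2⟩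
  obtain ⟨hT, hreach⟩ :=
    hclosed.closure_subset_iff.2 hsub (csInf_mem_closure hne ⟨0, fun t ht => ht.1.le⟩)
  have := add_F_smul_le_of_le hFc hFL hΔ hu hT hle
    (by rwa [← simplexGauge_smul, smul_inv_smul₀ hnorm.ne']) hreach
  rwa [smul_inv_smul₀ hnorm.ne', ← Bdot_smul, smul_inv_smul₀ hnorm.ne', add_comm] at this

theorem sInf_setH_le_of_one_lt (hFc : ConvexOn ℝ (orthant d) F)
    (hFL : LipschitzOnWith L F (orthant d)) (hΔ : 0 < Δ) (hx : x ∈ orthant d)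
    (hσ : 1 < simplexGauge F Δ x) :
    (setH F Δ x).Nonempty ∧ sInf (setH F Δ x) ≤ ‖x‖ := by
  have hx0 : x ≠ 0 := by rintro rfl; norm_num [simplexGauge] at hσ
  have hnorm : 0 < ‖x‖ := norm_pos_iff.2 hx0
  set c := (simplexGauge F Δ x)⁻¹
  have hc : 0 < c := inv_pos.2 (zero_lt_one.trans hσ)
  have hσc : simplexGauge F Δ (c • x) = 1 := by
    rw [simplexGauge_smul, inv_mul_cancel₀ (zero_lt_one.trans hσ).ne']
  have hmem : c * ‖x‖ ∈ setH F Δ x := by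
    refine ⟨mul_pos hc hnorm, ?_⟩
    have := F_le_Bdot_sub_simplexGauge hFc hFL hΔ (smul_mem_orthant hx hc.le) hσc.le
    rw [mul_div_cancel_right₀ _ hnorm.ne']
    rw [hσc] at this
    linarith
  refine ⟨⟨_, hmem⟩, (csInf_le ⟨0, fun t ht => ht.1.le⟩ hmem).trans ?_⟩
  exact mul_le_of_le_one_left hnorm.le (inv_le_one_of_one_le₀ hσ.le)

theorem Rfun_eq (hFc : ConvexOn ℝ (orthant d) F) (hFL : LipschitzOnWith L F (orthant d))
    (hΔ : 0 < Δ) (hx : x ∈ orthant d) :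
    Rfun F Δ x = if simplexGauge F Δ x ≤ 1
      then min (F 0 + Bdot F Δ x) (F x + Δ) else F x + Δ := by
  rcases eq_or_ne x 0 with rfl | hx0
  · simp [Rfun, simplexGauge, Bdot, hΔ.le]
  rw [Rfun, if_neg hx0]
  split_ifs with hreach hσ hσ
  · exact (min_eq_right (le_Bdot_of_sInf_setH_le hFc hFL hΔ hx hx0 hσ hreach.1 hreach.2)).symm
  · rfl
  · refine (min_eq_left ?_).symm
    by_contra h
    have hmem : ‖x‖ ∈ setH F Δ x := by
      refine ⟨norm_pos_iff.2 hx0, ?_⟩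
      rw [div_self (norm_ne_zero_iff.2 hx0), one_smul]
      linarith
    exact hreach ⟨⟨_, hmem⟩, csInf_le ⟨0, fun t ht => ht.1.le⟩ hmem⟩
  · exact absurd (sInf_setH_le_of_one_lt hFc hFL hΔ hx (not_le.1 hσ)) hreach

theorem Rfun_eq_of_lt (hlt : Rfun F Δ x < F x + Δ) : Rfun F Δ x = F 0 + Bdot F Δ x := by
  unfold Rfun at hlt ⊢
  split_ifs at hlt ⊢ with hx0
  · simp [hx0, Bdot]
  · exact absurd hlt (lt_irrefl _)
  · rfl

theorem continuousOn_Rfun (hFc : ConvexOn ℝ (orthant d) F)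
    (hFL : LipschitzOnWith L F (orthant d)) (hΔ : 0 < Δ) :
    ContinuousOn (Rfun F Δ) (orthant d) := by
  have hσ : Continuous (simplexGauge F Δ) := by
    rw [simplexGauge_eq_inner]; exact ContinuousLinearMap.continuous _
  have hB : Continuous (Bdot F Δ) := by
    rw [Bdot_eq_inner]; exact ContinuousLinearMap.continuous _
  have hFΔ : ContinuousOn (fun x => F x + Δ) (orthant d) :=
    hFL.continuousOn.add continuousOn_const
  refine ContinuousOn.congr ?_ fun x hx => Rfun_eq hFc hFL hΔ hx
  refine ContinuousOn.if ?_
    ((ContinuousOn.inf (continuous_const.add hB).continuousOn hFΔ).mono inter_subset_left)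
    (hFΔ.mono inter_subset_left)
  rintro x ⟨hx, hfr⟩
  have h1 : simplexGauge F Δ x = 1 := frontier_le_subset_eq hσ continuous_const hfr
  have := F_le_Bdot_sub_simplexGauge hFc hFL hΔ hx h1.le
  rw [h1] at this
  exact min_eq_right (by linarith)

theorem Rfun_mem_Icc (hFc : ConvexOn ℝ (orthant d) F) (hFL : LipschitzOnWith L F (orthant d))
    (hΔ : 0 < Δ) (hx : x ∈ orthant d) : F x ≤ Rfun F Δ x ∧ Rfun F Δ x ≤ F x + Δ := by
  rw [Rfun_eq hFc hFL hΔ hx]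
  split_ifs with hσ
  · have := F_le_Bdot_sub_simplexGauge hFc hFL hΔ hx hσ
    have := mul_nonneg (simplexGauge_nonneg (F := F) (Δ := Δ) hx) hΔ.le
    exact ⟨le_min (by linarith) (by linarith), min_le_right _ _⟩
  · exact ⟨by linarith, le_rfl⟩

theorem concaveOn_Rfun {D : Set (EuclideanSpace ℝ (Fin d))} (hD : Convex ℝ D)
    (hlt : ∀ x ∈ D, Rfun F Δ x < F x + Δ) : ConcaveOn ℝ D (Rfun F Δ) := by
  refine (((innerSL ℝ (WithLp.toLp 2 (Bvar F Δ))).toLinearMap.concaveOn hD).add_const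
    (F 0)).congr fun x hx => ?_
  rw [Rfun_eq_of_lt (hlt x hx), Bdot_eq_inner, add_comm]
  rfl

end Envelope

theorem R_mem_G_general {d : ℕ} (Δ : ℝ) (hΔ : 0 < Δ)
    (F : EuclideanSpace ℝ (Fin d) → ℝ)
    (hF0 : ∀ x ∈ orthant d, 0 ≤ F x)
    (hFconv : ConvexOn ℝ (orthant d) F)
    (L : NNReal) (hFlip : LipschitzOnWith L F (orthant d)) :
    memG F Δ (Rfun F Δ) :=
  ⟨continuousOn_Rfun hFconv hFlip hΔ,
    fun x hx => (hF0 x hx).trans (Rfun_mem_Icc hFconv hFlip hΔ hx).1,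
    fun _ hx => Rfun_mem_Icc hFconv hFlip hΔ hx,
    fun _ _ hD hlt => concaveOn_Rfun hD hlt⟩

/-- The function `R` belongs to the class `𝒢`. -/
theorem R_mem_G {d : ℕ} (hd : 0 < d) (Δ : ℝ) (hΔ : 0 < Δ)
    (F : EuclideanSpace ℝ (Fin d) → ℝ)
    (hF0 : ∀ x ∈ orthant d, 0 ≤ F x)
    (hFconv : ConvexOn ℝ (orthant d) F)
    (L : NNReal) (hFlip : LipschitzOnWith L F (orthant d)) :
    memG F Δ (Rfun F Δ) :=
  R_mem_G_general Δ hΔ F hF0 hFconv L hFlip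

end
end

section
/- One-dimensional absorption property: if g(a) = F(a) + Δ for some a ≥ 0, then g(u) = F(u) + Δ for every u ≥ a. Equivalently, once a function of the class 𝒢 touches the upper barrier F + Δ on a half-line, it coincides with F + Δ from that point on. -/
/-!
Work with the gap `h = g - F ∈ [0, Δ]`; it is concave (concave minus convex) on every interval
where `h < Δ`. If `h u < Δ` for some `u > a`, let `c` be the last point of `[a, u]` with `h c = Δ`.
If `h` returns to `Δ` at a first point `d > u`, then `h` is concave on `[c, d]` (by continuity at
the endpoints), so `h u ≥ min (h c) (h d) = Δ`. Otherwise `h` is concave on `[c, ∞)` and bounded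
below, hence nondecreasing there, and again `h u ≥ h c = Δ`.
-/

open Set Topology Filter

theorem ConcaveOn.closure_of_continuousOn {E : Type*} [AddCommGroup E] [Module ℝ E]
    [TopologicalSpace E] [IsTopologicalAddGroup E] [ContinuousSMul ℝ E] {s : Set E} {f : E → ℝ}
    (hf : ConcaveOn ℝ s f) (hcont : ContinuousOn f (closure s)) :
    ConcaveOn ℝ (closure s) f := by
  refine ⟨hf.1.closure, fun x hx y hy a b ha hb hab => ?_⟩
  have : (𝓝[s] x).NeBot := mem_closure_iff_nhdsWithin_neBot.mp hx
  have : (𝓝[s] y).NeBot := mem_closure_iff_nhdsWithin_neBot.mp hy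
  set l := 𝓝[s] x ×ˢ 𝓝[s] y
  have hpair : ∀ᶠ p in l, p.1 ∈ s ∧ p.2 ∈ s :=
    prod_mem_prod self_mem_nhdsWithin self_mem_nhdsWithin
  have hfst : Tendsto Prod.fst l (𝓝[s] x) := tendsto_fst
  have hsnd : Tendsto Prod.snd l (𝓝[s] y) := tendsto_snd
  have hcomb : Tendsto (fun p : E × E => a • p.1 + b • p.2) l (𝓝[closure s] (a • x + b • y)) :=
    tendsto_nhdsWithin_iff.mpr
      ⟨((hfst.mono_right nhdsWithin_le_nhds).const_smul a).add
        ((hsnd.mono_right nhdsWithin_le_nhds).const_smul b),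
      hpair.mono fun p hp => subset_closure (hf.1 hp.1 hp.2 ha hb hab)⟩
  refine le_of_tendsto_of_tendsto
    ((((hcont x hx).mono subset_closure).tendsto.comp hfst).const_smul a |>.add
      ((((hcont y hy).mono subset_closure).tendsto.comp hsnd).const_smul b))
    ((hcont _ (hf.1.closure hx hy ha hb hab)).tendsto.comp hcomb)
    (hpair.mono fun p hp => hf.2 hp.1 hp.2 ha hb hab)

theorem ConcaveOn.monotoneOn_of_bddBelow {f : ℝ → ℝ} {c : ℝ} (hf : ConcaveOn ℝ (Ici c) f)
    (hb : BddBelow (f '' Ici c)) : MonotoneOn f (Ici c) := by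
  intro x hx y hy hxy
  by_contra! hlt
  obtain ⟨b, hb⟩ := hb
  have hxy : x < y := hxy.lt_of_ne (by rintro rfl; exact hlt.false)
  set k := (f y - f x) / (y - x)
  have hk : k < 0 := div_neg_of_neg_of_pos (by linarith) (by linarith)
  -- a point `z > y` so far out that the secant line through `x, y` is below `b - 1` there
  set z := y + (f y - b + 1) / -k
  have hfyb : b ≤ f y := hb (mem_image_of_mem f hy)
  have hyz : y < z := lt_add_of_pos_right y (div_pos (by linarith) (by linarith))
  have hz : z ∈ Ici c := hy.trans hyz.le
  have hdrop : k * (z - y) = -(f y - b + 1) := by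
    simp only [z, add_sub_cancel_left]
    rw [mul_div_assoc', div_neg, mul_div_cancel_left₀ _ hk.ne]
  have hslope := (div_le_iff₀ (sub_pos.mpr hyz)).mp (hf.slope_anti_adjacent hx hz hxy hyz)
  linarith [hb (mem_image_of_mem f hz)]

theorem IsClosed.exists_last_mem_Icc {α : Type*} [LinearOrder α] [TopologicalSpace α]
    [OrderClosedTopology α] [CompactIccSpace α] {S : Set α} (hS : IsClosed S) {a u : α}
    (ha : a ∈ S) (hau : a ≤ u) : ∃ c ∈ Icc a u ∩ S, ∀ x ∈ Ioc c u, x ∉ S := by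
  obtain ⟨c, hc, hc_max⟩ := (isCompact_Icc.inter_right hS).exists_isGreatest ⟨a, ⟨le_rfl, hau⟩, ha⟩
  exact ⟨c, hc, fun x hx hxS => (hc_max ⟨⟨hc.1.1.trans hx.1.le, hx.2⟩, hxS⟩).not_gt hx.1⟩

theorem IsClosed.exists_first_mem_Icc {α : Type*} [LinearOrder α] [TopologicalSpace α]
    [OrderClosedTopology α] [CompactIccSpace α] {S : Set α} (hS : IsClosed S) {u d : α}
    (hd : d ∈ S) (hud : u ≤ d) : ∃ c ∈ Icc u d ∩ S, ∀ x ∈ Ico u c, x ∉ S := by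
  obtain ⟨c, hc, hc_min⟩ := (isCompact_Icc.inter_right hS).exists_isLeast ⟨d, ⟨hud, le_rfl⟩, hd⟩
  exact ⟨c, hc, fun x hx hxS => (hc_min ⟨⟨hx.1, hx.2.le.trans hc.1.2⟩, hxS⟩).not_gt hx.2⟩

theorem eq_of_ge_of_concaveOn_below {h : ℝ → ℝ} {a Δ : ℝ} (hcont : ContinuousOn h (Ici a))
    (hbdd : BddBelow (h '' Ici a)) (hle : ∀ x ∈ Ici a, h x ≤ Δ)
    (hconc : ∀ I ⊆ Ici a, Convex ℝ I → (∀ x ∈ I, h x < Δ) → ConcaveOn ℝ I h)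
    (ha : h a = Δ) {u : ℝ} (hu : a ≤ u) : h u = Δ := by
  set S := Ici a ∩ h ⁻¹' {Δ}
  have hS : IsClosed S := hcont.preimage_isClosed_of_isClosed isClosed_Ici isClosed_singleton
  have hlt : ∀ x ∈ Ici a, x ∉ S → h x < Δ := fun x hx hxS =>
    (hle x hx).lt_of_ne fun hxΔ => hxS ⟨hx, hxΔ⟩
  by_contra hne
  obtain ⟨c, ⟨⟨hac, hcu_le⟩, hcS⟩, hc_last⟩ := hS.exists_last_mem_Icc ⟨mem_Ici.2 le_rfl, ha⟩ hu
  have hcu : c < u := hcu_le.lt_of_ne (by rintro rfl; exact hne hcS.2)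
  have hsub : Ici c ⊆ Ici a := Ici_subset_Ici.mpr hac
  suffices h c ≤ h u from hne ((hle u hu).antisymm (hcS.2 ▸ this))
  by_cases hd : ∃ d, u ≤ d ∧ d ∈ S
  · obtain ⟨d₀, hud₀, hd₀⟩ := hd
    obtain ⟨d, ⟨⟨hud_le, -⟩, hdS⟩, hd_first⟩ := hS.exists_first_mem_Icc hd₀ hud₀
    have hud : u < d := hud_le.lt_of_ne (by rintro rfl; exact hne hdS.2)
    have hcd : c < d := hcu.trans hud
    have hbelow : ∀ x ∈ Ioo c d, h x < Δ := fun x hx =>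
      hlt x (hsub hx.1.le) ((le_total x u).elim (fun hxu => hc_last x ⟨hx.1, hxu⟩)
        fun hux => hd_first x ⟨hux, hx.2⟩)
    have hIcc : ConcaveOn ℝ (Icc c d) h := by
      have := (hconc _ (fun x hx => hsub hx.1.le) (convex_Ioo c d) hbelow).closure_of_continuousOn
        (by rw [closure_Ioo hcd.ne]; exact hcont.mono fun x hx => hsub hx.1)
      rwa [closure_Ioo hcd.ne] at this
    calc h c = min (h c) (h d) := by rw [hcS.2, hdS.2, min_self]
      _ ≤ h u := hIcc.min_le_of_mem_Icc (left_mem_Icc.mpr hcd.le) (right_mem_Icc.mpr hcd.le)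
          ⟨hcu.le, hud.le⟩
  · push Not at hd
    have hbelow : ∀ x ∈ Ioi c, h x < Δ := fun x hx =>
      hlt x (hsub (Ioi_subset_Ici_self hx))
        ((le_total x u).elim (fun hxu => hc_last x ⟨hx, hxu⟩) fun hux => hd x hux)
    have hIci : ConcaveOn ℝ (Ici c) h := by
      have := (hconc _ (Ioi_subset_Ici_self.trans hsub) (convex_Ioi c) hbelow)
        |>.closure_of_continuousOn (by rw [closure_Ioi]; exact hcont.mono hsub)
      rwa [closure_Ioi] at this
    exact hIci.monotoneOn_of_bddBelow (hbdd.mono (image_mono hsub)) (mem_Ici.2 le_rfl) hcu.le hcu.le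

theorem absorption_one_dim_general (Δ : ℝ) (F g : ℝ → ℝ)
    (hFconv : ConvexOn ℝ (Ici (0 : ℝ)) F)
    (L : NNReal) (hFlip : LipschitzOnWith L F (Ici (0 : ℝ)))
    (hgcont : ContinuousOn g (Ici (0 : ℝ)))
    (hgbound : ∀ x ∈ Ici (0 : ℝ), F x ≤ g x ∧ g x ≤ F x + Δ)
    (hgconc : ∀ I : Set ℝ, I ⊆ Ici (0 : ℝ) → Convex ℝ I →
      (∀ x ∈ I, g x < F x + Δ) → ConcaveOn ℝ I g)
    (a : ℝ) (ha : 0 ≤ a) (hga : g a = F a + Δ) :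
    ∀ u : ℝ, a ≤ u → g u = F u + Δ := by
  have hsub : Ici a ⊆ Ici 0 := Ici_subset_Ici.mpr ha
  intro u hu
  have hgap : g u - F u = Δ := by
    refine eq_of_ge_of_concaveOn_below ((hgcont.sub hFlip.continuousOn).mono hsub) ⟨0, ?_⟩
      (fun x hx => sub_le_iff_le_add'.mpr (hgbound x (hsub hx)).2)
      (fun I hI hIconv hI_below => ?_) (sub_eq_of_eq_add' hga) hu
    · rintro _ ⟨x, hx, rfl⟩
      exact sub_nonneg.mpr (hgbound x (hsub hx)).1
    · exact (hgconc I (hI.trans hsub) hIconv fun x hx => sub_lt_iff_lt_add'.mp (hI_below x hx)).sub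
        (hFconv.subset (hI.trans hsub) hIconv)
  linarith

/-- One-dimensional absorption property: if a member `g` of the class `𝒢`
(for a convex, Lipschitz `F : ℝ₊ → ℝ₊` and a penalty `Δ > 0`) touches the upper
barrier `F + Δ` at a point `a ≥ 0`, then `g = F + Δ` on all of `[a, ∞)`. -/
theorem absorption_one_dim (Δ : ℝ) (hΔ : 0 < Δ) (F g : ℝ → ℝ)
    (hF0 : ∀ x ∈ Ici (0 : ℝ), 0 ≤ F x)
    (hFconv : ConvexOn ℝ (Ici (0 : ℝ)) F)
    (L : NNReal) (hFlip : LipschitzOnWith L F (Ici (0 : ℝ)))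
    (hg0 : ∀ x ∈ Ici (0 : ℝ), 0 ≤ g x)
    (hgcont : ContinuousOn g (Ici (0 : ℝ)))
    (hgbound : ∀ x ∈ Ici (0 : ℝ), F x ≤ g x ∧ g x ≤ F x + Δ)
    (hgconc : ∀ I : Set ℝ, I ⊆ Ici (0 : ℝ) → Convex ℝ I →
      (∀ x ∈ I, g x < F x + Δ) → ConcaveOn ℝ I g)
    (a : ℝ) (ha : 0 ≤ a) (hga : g a = F a + Δ) :
    ∀ u : ℝ, a ≤ u → g u = F u + Δ :=
  absorption_one_dim_general Δ F g hFconv L hFlip hgcont hgbound hgconc a ha hga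
end

section
/- Game call option with large penalty: here d = 1, F(x) = (x−K)^+ for a constant K > 0, and Δ > K. The function R(x) = x belongs to 𝒢 and is its minimal element: R(x) ≤ g(x) for every g ∈ 𝒢 and every x ≥ 0. -/
/-!
Write `φ = g - id`. Since `Δ > K`, we have `g < F + Δ` wherever `φ ≤ 0`, so `g`, and hence `φ`,
is concave on every interval on which `φ ≤ 0`; moreover `φ(0) = g(0) ≥ 0` and `φ ≥ F - id ≥ -K`.
If `φ(x₀) < 0`, take the last point `a ≤ x₀` with `φ(a) ≥ 0` and, if there is one, the first
point `b ≥ x₀` with `φ(b) ≥ 0`; then `φ ≤ 0` on `[a, b]` (or on `[a, ∞)`), so `φ` is concave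
there. A concave function on `[a, b]` is at least `min (φ a) (φ b) ≥ 0`, and a concave function
bounded below on `[a, ∞)` is nondecreasing, so `φ(x₀) ≥ φ(a) ≥ 0` in either case.
-/

open Set
open scoped Classical

noncomputable section

/-- Membership in the class `𝒢` (one-dimensional case): `f : ℝ₊ → ℝ₊` is continuous,
`F ≤ f ≤ F + Δ` on `ℝ₊`, and `f` is concave on every interval (convex subset)
`I ⊆ ℝ₊` on which `f < F + Δ`. -/
def memG1 (F : ℝ → ℝ) (Δ : ℝ) (f : ℝ → ℝ) : Prop :=
  ContinuousOn f (Ici (0 : ℝ)) ∧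
  (∀ x ∈ Ici (0 : ℝ), 0 ≤ f x) ∧
  (∀ x ∈ Ici (0 : ℝ), F x ≤ f x ∧ f x ≤ F x + Δ) ∧
  (∀ I : Set ℝ, I ⊆ Ici (0 : ℝ) → Convex ℝ I →
    (∀ x ∈ I, f x < F x + Δ) → ConcaveOn ℝ I f)

theorem ConcaveOn.monotoneOn_Ici_of_bddBelow {𝕜 : Type*} [Field 𝕜] [LinearOrder 𝕜]
    [IsStrictOrderedRing 𝕜] {φ : 𝕜 → 𝕜} {a : 𝕜} (hφ : ConcaveOn 𝕜 (Ici a) φ)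
    (hbdd : BddBelow (φ '' Ici a)) : MonotoneOn φ (Ici a) := by
  intro x hx y hy hxy
  rcases hxy.eq_or_lt with rfl | hxy
  · rfl
  by_contra! hdrop
  obtain ⟨m, hm⟩ := hbdd
  have hym : m ≤ φ y := hm (mem_image_of_mem φ hy)
  -- far enough to the right, the secant through `(x, φ x)` and `(y, φ y)` falls below `m`
  set z := y + (y - x) * (φ y - m) / (φ x - φ y) + 1
  have hxy' : 0 < y - x := sub_pos.2 hxy
  have hym' : 0 ≤ φ y - m := sub_nonneg.2 hym
  have hdrop' : 0 < φ x - φ y := sub_pos.2 hdrop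
  have hyz : y < z := by
    have : 0 ≤ (y - x) * (φ y - m) / (φ x - φ y) := by positivity
    linarith
  have hz : z ∈ Ici a := le_trans hy hyz.le
  have hzm : m ≤ φ z := hm (mem_image_of_mem φ hz)
  have hsecant := hφ.neg.secant_mono_aux1 hx hz hxy hyz
  have hz_eq : (z - y) * (φ x - φ y) = (y - x) * (φ y - m) + (φ x - φ y) := by
    simp only [z]; field_simp; ring
  simp only [Pi.neg_apply] at hsecant
  nlinarith [mul_le_mul_of_nonneg_left hzm hxy'.le]

theorem ContinuousOn.exists_nonneg_nonpos_after {φ : ℝ → ℝ} {l r : ℝ}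
    (hφ : ContinuousOn φ (Icc l r)) (hlr : l ≤ r) (hl : 0 ≤ φ l) (hr : φ r < 0) :
    ∃ a ∈ Icc l r, 0 ≤ φ a ∧ ∀ x ∈ Icc a r, φ x ≤ 0 := by
  set S := Icc l r ∩ φ ⁻¹' Ici 0
  have hS : IsClosed S := hφ.preimage_isClosed_of_isClosed isClosed_Icc isClosed_Ici
  have hSbdd : BddAbove S := ⟨r, fun x hx => hx.1.2⟩
  set a := sSup S
  have ha : a ∈ S := hS.csSup_mem ⟨l, ⟨le_rfl, hlr⟩, hl⟩ hSbdd
  have hneg : ∀ x ∈ Ioc a r, φ x < 0 := fun x hx =>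
    not_le.1 fun h => hx.1.not_ge (le_csSup hSbdd ⟨⟨ha.1.1.trans hx.1.le, hx.2⟩, h⟩)
  have har : a ≠ r := fun h => hr.not_ge (h ▸ ha.2)
  -- `{φ ≤ 0}` is closed and contains `Ioc a r`, hence its closure `Icc a r`
  have hT : IsClosed (Icc l r ∩ φ ⁻¹' Iic 0) :=
    hφ.preimage_isClosed_of_isClosed isClosed_Icc isClosed_Iic
  have hsub : Icc a r ⊆ Icc l r ∩ φ ⁻¹' Iic 0 := by
    rw [← closure_Ioc har, hT.closure_subset_iff]
    exact fun x hx => ⟨⟨ha.1.1.trans hx.1.le, hx.2⟩, (hneg x hx).le⟩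
  exact ⟨a, ha.1, ha.2, fun x hx => (hsub hx).2⟩

theorem ContinuousOn.exists_nonneg_nonpos_before {φ : ℝ → ℝ} {l r : ℝ}
    (hφ : ContinuousOn φ (Icc l r)) (hlr : l ≤ r) (hl : φ l < 0) (hr : 0 ≤ φ r) :
    ∃ b ∈ Icc l r, 0 ≤ φ b ∧ ∀ x ∈ Icc l b, φ x ≤ 0 := by
  have hψ : ContinuousOn (fun x => φ (-x)) (Icc (-r) (-l)) :=
    hφ.comp continuousOn_neg fun x hx => by simp only [mem_Icc] at hx ⊢; constructor <;> linarith
  obtain ⟨a, ha, hφa, hψa⟩ :=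
    hψ.exists_nonneg_nonpos_after (neg_le_neg hlr) (by simpa using hr) (by simpa using hl)
  refine ⟨-a, ⟨by linarith [ha.2], by linarith [ha.1]⟩, hφa, fun x hx => ?_⟩
  simpa using hψa (-x) ⟨by linarith [hx.2], by linarith [hx.1]⟩

theorem nonneg_of_concaveOn_of_nonpos {φ : ℝ → ℝ} {l : ℝ} (hφ : ContinuousOn φ (Ici l))
    (hl : 0 ≤ φ l) (hbdd : BddBelow (φ '' Ici l))
    (hconc : ∀ I ⊆ Ici l, Convex ℝ I → (∀ x ∈ I, φ x ≤ 0) → ConcaveOn ℝ I φ) :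
    ∀ x ∈ Ici l, 0 ≤ φ x := by
  intro x₀ hx₀
  by_contra! hneg
  obtain ⟨a, ⟨hla, hax₀⟩, hφa, hleft⟩ :=
    (hφ.mono Icc_subset_Ici_self).exists_nonneg_nonpos_after hx₀ hl hneg
  by_cases hright : ∃ y ∈ Ici x₀, 0 ≤ φ y
  · obtain ⟨y, hy, hφy⟩ := hright
    obtain ⟨b, ⟨hx₀b, -⟩, hφb, hright⟩ :=
      (hφ.mono (Icc_subset_Ici_iff hy |>.2 hx₀)).exists_nonneg_nonpos_before hy hneg hφy
    have hab := hax₀.trans hx₀b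
    have hconcab : ConcaveOn ℝ (Icc a b) φ := by
      refine hconc _ (Icc_subset_Ici_iff hab |>.2 hla) (convex_Icc a b) fun x hx => ?_
      rcases le_total x x₀ with hx' | hx'
      · exact hleft x ⟨hx.1, hx'⟩
      · exact hright x ⟨hx', hx.2⟩
    have hx₀ab : x₀ ∈ segment ℝ a b := by rw [segment_eq_Icc hab]; exact ⟨hax₀, hx₀b⟩
    have := hconcab.ge_on_segment (left_mem_Icc.2 hab) (right_mem_Icc.2 hab) hx₀ab
    exact hneg.not_ge (le_min hφa hφb |>.trans this)
  · push Not at hright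
    have hconca : ConcaveOn ℝ (Ici a) φ := by
      refine hconc _ (Ici_subset_Ici.2 hla) (convex_Ici a) fun x hx => ?_
      rcases le_total x x₀ with hx' | hx'
      · exact hleft x ⟨hx, hx'⟩
      · exact (hright x hx').le
    have hmono := hconca.monotoneOn_Ici_of_bddBelow
      (hbdd.mono (image_mono (Ici_subset_Ici.2 hla)))
    exact hneg.not_ge (hφa.trans (hmono self_mem_Ici hax₀ hax₀))

theorem memG1_id {K Δ : ℝ} (hK : 0 ≤ K) (hΔK : K ≤ Δ) :
    memG1 (fun x => max (x - K) 0) Δ (fun x => x) := by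
  refine ⟨continuousOn_id, fun x hx => hx, fun x hx => ⟨?_, ?_⟩, fun I _ hI _ => concaveOn_id hI⟩
  · exact max_le (by linarith) hx
  · linarith [le_max_left (x - K) 0]

theorem le_of_memG1 {K Δ : ℝ} (hΔK : K < Δ) {g : ℝ → ℝ}
    (hg : memG1 (fun x => max (x - K) 0) Δ g) : ∀ x ∈ Ici (0 : ℝ), x ≤ g x := by
  obtain ⟨hcont, hnonneg, hbounds, hconc⟩ := hg
  have hφ : ∀ x ∈ Ici (0 : ℝ), 0 ≤ g x - x := by
    refine nonneg_of_concaveOn_of_nonpos (hcont.sub continuousOn_id)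
      (by simpa using hnonneg 0 self_mem_Ici) ⟨-K, ?_⟩
      fun I hI hIc hle => (hconc I hI hIc fun x hx => ?_).sub (convexOn_id hIc)
    · rintro _ ⟨x, hx, rfl⟩
      linarith [le_max_left (x - K) 0, (hbounds x hx).1]
    · linarith [hle x hx, le_max_left (x - K) 0]
  exact fun x hx => sub_nonneg.1 (hφ x hx)

/-- Game call option with large penalty (`Δ > K`): with `F(x) = (x - K)⁺`, the
function `R(x) = x` belongs to `𝒢` and is its minimal element. -/
theorem call_large_penalty (K Δ : ℝ) (hK : 0 < K) (hΔK : K < Δ) :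
    memG1 (fun x => max (x - K) 0) Δ (fun x => x) ∧
    ∀ g : ℝ → ℝ, memG1 (fun x => max (x - K) 0) Δ g →
      ∀ x ∈ Ici (0 : ℝ), x ≤ g x :=
  ⟨memG1_id hK.le hΔK.le, fun _ hg => le_of_memG1 hΔK hg⟩

end
end

section
/- Game put option with large penalty: here d = 1, F(x) = (K−x)^+ for a constant K > 0, and Δ > K. The constant function R ≡ K belongs to 𝒢 and is its minimal element: K ≤ g(x) for every g ∈ 𝒢 and every x ≥ 0. -/
open Set
open scoped Classical

noncomputable section

section

open Filter Topology

variable {g : ℝ → ℝ}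

theorem ContinuousOn.exists_last_superlevel_Icc {p q M : ℝ} (hg : ContinuousOn g (Icc p q))
    (hpq : p ≤ q) (hp : M ≤ g p) : ∃ a ∈ Icc p q, M ≤ g a ∧ ∀ x ∈ Ioc a q, g x < M := by
  obtain ⟨a, ⟨haI, hga⟩, hmax⟩ :=
    (isCompact_Icc.of_isClosed_subset (hg.preimage_isClosed_of_isClosed isClosed_Icc isClosed_Ici)
      inter_subset_left).exists_isGreatest ⟨p, left_mem_Icc.2 hpq, hp⟩
  refine ⟨a, haI, hga, fun x hx => ?_⟩
  by_contra! hgx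
  exact (hmax ⟨⟨haI.1.trans hx.1.le, hx.2⟩, hgx⟩).not_gt hx.1

theorem ContinuousOn.exists_first_superlevel_Icc {p q M : ℝ} (hg : ContinuousOn g (Icc p q))
    (hpq : p ≤ q) (hq : M ≤ g q) : ∃ b ∈ Icc p q, M ≤ g b ∧ ∀ x ∈ Ico p b, g x < M := by
  obtain ⟨b, ⟨hbI, hgb⟩, hmin⟩ :=
    (isCompact_Icc.of_isClosed_subset (hg.preimage_isClosed_of_isClosed isClosed_Icc isClosed_Ici)
      inter_subset_left).exists_isLeast ⟨q, right_mem_Icc.2 hpq, hq⟩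
  refine ⟨b, hbI, hgb, fun x hx => ?_⟩
  by_contra! hgx
  exact (hmin ⟨⟨hx.1, hx.2.le.trans hbI.2⟩, hgx⟩).not_gt hx.2

theorem ConcaveOn.min_le_of_continuousWithinAt {a b x : ℝ} (hg : ConcaveOn ℝ (Ioo a b) g)
    (ha : ContinuousWithinAt g (Ioi a) a) (hb : ContinuousWithinAt g (Iio b) b)
    (hx : x ∈ Ioo a b) : min (g a) (g b) ≤ g x := by
  have hlim : Tendsto (fun p : ℝ × ℝ => min (g p.1) (g p.2)) (𝓝[>] a ×ˢ 𝓝[<] b)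
      (𝓝 (min (g a) (g b))) :=
    (ha.tendsto.comp tendsto_fst).min (hb.tendsto.comp tendsto_snd)
  refine le_of_tendsto hlim ?_
  filter_upwards [prod_mem_prod (Ioo_mem_nhdsGT hx.1) (Ioo_mem_nhdsLT hx.2)]
    with ⟨s, u⟩ ⟨hs, hu⟩
  refine hg.min_le_of_mem_segment ⟨hs.1, hs.2.trans hx.2⟩ ⟨hx.1.trans hu.1, hu.2⟩ ?_
  rw [segment_eq_Icc (hs.2.trans hu.1).le]
  exact ⟨hs.2.le, hu.1.le⟩

theorem ConcaveOn.monotoneOn_of_bddBelow_s11 {a : ℝ} (hg : ConcaveOn ℝ (Ioi a) g)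
    (hbdd : BddBelow (g '' Ioi a)) : MonotoneOn g (Ioi a) := by
  obtain ⟨L, hL⟩ := hbdd
  intro s hs x hx hsx
  by_contra! hdrop
  have hsx' : s < x := hsx.lt_of_ne (by rintro rfl; exact hdrop.false)
  set m := (g x - g s) / (x - s)
  have hm : m < 0 := div_neg_of_neg_of_pos (by linarith) (by linarith)
  have hLx : L ≤ g x := hL (mem_image_of_mem g hx)
  -- along the secant through `s` and `x`, the value `L - 1` is reached at `t`
  set t := x + (L - 1 - g x) / m
  have hxt : x < t := by
    have : 0 < (L - 1 - g x) / m := div_pos_of_neg_of_neg (by linarith) hm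
    linarith
  have hslope : (g t - g x) / (t - x) ≤ m :=
    hg.slope_anti_adjacent hs (hx.trans hxt : a < t) hsx' hxt
  rw [div_le_iff₀ (sub_pos.2 hxt), show t - x = (L - 1 - g x) / m by ring,
    mul_div_cancel₀ _ hm.ne] at hslope
  linarith [hL (mem_image_of_mem g (hx.trans hxt : t ∈ Ioi a))]

theorem MonotoneOn.le_of_continuousWithinAt {a x : ℝ} (hg : MonotoneOn g (Ioi a))
    (ha : ContinuousWithinAt g (Ioi a) a) (hx : a < x) : g a ≤ g x := by
  refine le_of_tendsto ha.tendsto ?_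
  filter_upwards [Ioo_mem_nhdsGT hx] with s hs
  exact hg hs.1 hx hs.2.le

theorem le_of_mem_Ici_of_concaveOn_sublevel {p M : ℝ} (hcont : ContinuousOn g (Ici p))
    (hbdd : BddBelow (g '' Ici p)) (hp : M ≤ g p)
    (hconc : ∀ I ⊆ Ici p, Convex ℝ I → (∀ x ∈ I, g x < M) → ConcaveOn ℝ I g) :
    ∀ x ∈ Ici p, M ≤ g x := by
  intro x₀ hx₀
  by_contra! hlt
  obtain ⟨a, ⟨hpa, hax₀⟩, hga, hleft⟩ :=
    (hcont.mono Icc_subset_Ici_self).exists_last_superlevel_Icc hx₀ hp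
  have hax₀ : a < x₀ := hax₀.lt_of_ne (by rintro rfl; linarith)
  have hcont_a : ContinuousWithinAt g (Ioi a) a :=
    (hcont a hpa).mono fun y hy => hpa.trans (le_of_lt hy)
  by_cases hreturn : ∃ t, x₀ < t ∧ M ≤ g t
  · obtain ⟨t, hx₀t, hgt⟩ := hreturn
    obtain ⟨b, ⟨hx₀b, -⟩, hgb, hright⟩ :=
      (hcont.mono fun y hy => hx₀.trans hy.1).exists_first_superlevel_Icc hx₀t.le hgt
    have hx₀b : x₀ < b := hx₀b.lt_of_ne (by rintro rfl; linarith)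
    have hconc_ab : ConcaveOn ℝ (Ioo a b) g :=
      hconc _ (fun y hy => hpa.trans hy.1.le) (convex_Ioo a b) fun y hy =>
        (le_or_gt y x₀).elim (fun h => hleft y ⟨hy.1, h⟩) fun h => hright y ⟨h.le, hy.2⟩
    have hcont_b : ContinuousWithinAt g (Iio b) b :=
      (hcont.continuousAt (Ici_mem_nhds (hx₀.trans_lt hx₀b))).continuousWithinAt
    have := hconc_ab.min_le_of_continuousWithinAt hcont_a hcont_b ⟨hax₀, hx₀b⟩
    exact (lt_min (hlt.trans_le hga) (hlt.trans_le hgb)).not_ge this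
  · push Not at hreturn
    have hconc_a : ConcaveOn ℝ (Ioi a) g :=
      hconc _ (fun y hy => hpa.trans (le_of_lt hy)) (convex_Ioi a) fun y hy =>
        (le_or_gt y x₀).elim (fun h => hleft y ⟨hy, h⟩) (hreturn y)
    have hmono := hconc_a.monotoneOn_of_bddBelow_s11
      (hbdd.mono (image_mono fun y hy => hpa.trans (le_of_lt hy)))
    linarith [hmono.le_of_continuousWithinAt hcont_a hax₀]

end

/-- Game put option with large penalty (`Δ > K`): with `F(x) = (K - x)⁺`, the
constant function `R ≡ K` belongs to `𝒢` and is its minimal element: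
`K ≤ g(x)` for every `g ∈ 𝒢` and every `x ≥ 0`. -/
theorem put_large_penalty (K Δ : ℝ) (hK : 0 < K) (hΔK : K < Δ) :
    memG1 (fun x => max (K - x) 0) Δ (fun _ => K) ∧
    ∀ g : ℝ → ℝ, memG1 (fun x => max (K - x) 0) Δ g →
      ∀ x ∈ Ici (0 : ℝ), K ≤ g x := by
  constructor
  · refine ⟨continuousOn_const, fun _ _ => hK.le, fun x hx => ⟨?_, ?_⟩,
      fun I _ hI _ => concaveOn_const K hI⟩
    · exact max_le (by linarith [mem_Ici.1 hx]) hK.le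
    · linarith [le_max_right (K - x) 0]
  · rintro g ⟨hcont, hnonneg, hbnd, hconc⟩
    refine le_of_mem_Ici_of_concaveOn_sublevel hcont ⟨0, ?_⟩ ?_
      fun I hI hIc hlt => hconc I hI hIc fun x hx => ?_
    · rintro _ ⟨x, hx, rfl⟩
      exact hnonneg x hx
    · simpa [hK.le] using (hbnd 0 self_mem_Ici).1
    · linarith [hlt x hx, le_max_right (K - x) 0]

end
end
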